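/- arXiv:1911.04299 — 4 statements merged into one kernel-verified Lean document; each statement's English description precedes it below -/
import Mathlib

section
/- If Q is a d×d Kolmogorov matrix and P^τ = I + τQ with τn → t as τ → 0 and n → ∞, then (P^τ)^n converges to the matrix exponential e^{tQ}. -/
/-!
Write `a = τ • Q`. Both `1 + a` and `exp a` have norm at most `e^{‖a‖}`, commute, and differ by
the Taylor remainder `exp a - 1 - a = O(‖a‖²)`. Telescoping `xⁿ - yⁿ` therefore gives
`‖(1 + a)ⁿ - exp (n • a)‖ ≤ n ‖a‖² e^{n ‖a‖} = |n τ| |τ| ‖Q‖² e^{|n τ| ‖Q‖}`, which tends to `0`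
since `n τ` stays bounded while `τ → 0`; and `exp ((n τ) • Q) → exp (t • Q)` by continuity.
-/

open Filter Finset Nat NormedSpace Topology

section BanachAlgebra

variable {A : Type*} [NormedRing A] [NormOneClass A]

theorem norm_pow_sub_pow_le_of_commute {x y : A} (h : Commute x y) {M : ℝ} (hx : ‖x‖ ≤ M)
    (hy : ‖y‖ ≤ M) (n : ℕ) : ‖x ^ n - y ^ n‖ ≤ n * M ^ (n - 1) * ‖x - y‖ := by
  have hM : 0 ≤ M := (norm_nonneg x).trans hx
  have hterm : ∀ i ∈ range n, ‖x ^ i * y ^ (n - 1 - i)‖ ≤ M ^ (n - 1) := fun i hi ↦ by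
    have hi : i + (n - 1 - i) = n - 1 := by have := mem_range.1 hi; omega
    calc ‖x ^ i * y ^ (n - 1 - i)‖ ≤ ‖x‖ ^ i * ‖y‖ ^ (n - 1 - i) :=
          (norm_mul_le _ _).trans (mul_le_mul (norm_pow_le _ _) (norm_pow_le _ _)
            (norm_nonneg _) (by positivity))
      _ ≤ M ^ i * M ^ (n - 1 - i) := by gcongr
      _ = M ^ (n - 1) := by rw [← pow_add, hi]
  rw [← h.geom_sum₂_mul]
  calc ‖(∑ i ∈ range n, x ^ i * y ^ (n - 1 - i)) * (x - y)‖
      ≤ (∑ i ∈ range n, ‖x ^ i * y ^ (n - 1 - i)‖) * ‖x - y‖ :=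
        (norm_mul_le _ _).trans (by gcongr; exact norm_sum_le _ _)
    _ ≤ n * M ^ (n - 1) * ‖x - y‖ := by
        gcongr
        simpa using sum_le_sum hterm

variable [NormedAlgebra ℝ A] [CompleteSpace A]

theorem norm_exp_sub_sum_le_norm_pow_mul_exp (a : A) (m : ℕ) :
    ‖exp a - ∑ k ∈ range m, (k !⁻¹ : ℝ) • a ^ k‖ ≤ ‖a‖ ^ m * Real.exp ‖a‖ := by
  have hsum := expSeries_summable' (𝕂 := ℝ) a
  have htail : Summable fun k ↦ ‖((k + m) !⁻¹ : ℝ) • a ^ (k + m)‖ :=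
    (summable_nat_add_iff m).2 (norm_expSeries_summable' a)
  have hbound : Summable fun k ↦ ‖a‖ ^ m * (‖a‖ ^ k / k !) :=
    (Real.summable_pow_div_factorial ‖a‖).mul_left _
  rw [congrFun (exp_eq_tsum ℝ) a, ← hsum.sum_add_tsum_nat_add m, add_sub_cancel_left]
  refine (norm_tsum_le_tsum_norm htail).trans ((htail.tsum_le_tsum (fun k ↦ ?_) hbound).trans ?_)
  · have hfact : ((k + m) ! : ℝ)⁻¹ ≤ (k ! : ℝ)⁻¹ :=
      inv_anti₀ (by positivity) (by exact_mod_cast factorial_le (le_add_right le_rfl))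
    calc ‖((k + m) !⁻¹ : ℝ) • a ^ (k + m)‖ ≤ ((k + m) ! : ℝ)⁻¹ * ‖a‖ ^ (k + m) := by
          rw [norm_smul, norm_inv, Real.norm_natCast]
          gcongr
          exact norm_pow_le _ _
      _ ≤ (k ! : ℝ)⁻¹ * ‖a‖ ^ (k + m) := by gcongr
      _ = ‖a‖ ^ m * (‖a‖ ^ k / k !) := by ring
  · rw [tsum_mul_left, Real.exp_eq_exp_ℝ, exp_eq_tsum_div]

theorem norm_exp_le_exp_norm (a : A) : ‖exp a‖ ≤ Real.exp ‖a‖ := by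
  simpa using norm_exp_sub_sum_le_norm_pow_mul_exp a 0

theorem norm_exp_sub_one_sub_le (a : A) : ‖exp a - 1 - a‖ ≤ ‖a‖ ^ 2 * Real.exp ‖a‖ := by
  simpa [sum_range_succ, sub_sub] using norm_exp_sub_sum_le_norm_pow_mul_exp a 2

theorem norm_one_add_pow_sub_exp_pow_le (a : A) (n : ℕ) :
    ‖(1 + a) ^ n - exp a ^ n‖ ≤ n * ‖a‖ ^ 2 * Real.exp (n * ‖a‖) := by
  have hone_add : ‖1 + a‖ ≤ Real.exp ‖a‖ :=
    (norm_add_le _ _).trans (by rw [norm_one, add_comm]; exact Real.add_one_le_exp _)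
  have hcomm : Commute (1 + a) (exp a) :=
    (Commute.one_left _).add_left ((Commute.refl a).exp_right)
  have hdiff : ‖(1 + a) - exp a‖ ≤ ‖a‖ ^ 2 * Real.exp ‖a‖ := by
    rw [norm_sub_rev, ← sub_sub]
    exact norm_exp_sub_one_sub_le a
  calc ‖(1 + a) ^ n - exp a ^ n‖ ≤ n * Real.exp ‖a‖ ^ (n - 1) * ‖(1 + a) - exp a‖ :=
        norm_pow_sub_pow_le_of_commute hcomm hone_add (norm_exp_le_exp_norm a) n
    _ ≤ n * Real.exp ‖a‖ ^ (n - 1) * (‖a‖ ^ 2 * Real.exp ‖a‖) := by gcongr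
    _ = n * ‖a‖ ^ 2 * Real.exp (n * ‖a‖) := by
        rcases n with _ | n
        · simp
        · rw [Real.exp_nat_mul, add_tsub_cancel_right]
          ring

theorem tendsto_one_add_smul_pow_exp {ι : Type*} {l : Filter ι} (Q : A) {t : ℝ} {τ : ι → ℝ}
    {n : ι → ℕ} (hτ : Tendsto τ l (𝓝 0)) (hnt : Tendsto (fun k ↦ (n k : ℝ) * τ k) l (𝓝 t)) :
    Tendsto (fun k ↦ (1 + τ k • Q) ^ n k) l (𝓝 (exp (t • Q))) := by
  let : NormedAlgebra ℚ A := .restrictScalars ℚ ℝ A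
  have hexp : ∀ k, exp (((n k : ℝ) * τ k) • Q) = exp (τ k • Q) ^ n k := fun k ↦ by
    rw [mul_smul, Nat.cast_smul_eq_nsmul, exp_nsmul]
  have hbound : ∀ k, ‖(1 + τ k • Q) ^ n k - exp (((n k : ℝ) * τ k) • Q)‖ ≤
      |(n k : ℝ) * τ k| * |τ k| * ‖Q‖ ^ 2 * Real.exp (|(n k : ℝ) * τ k| * ‖Q‖) := fun k ↦ by
    calc _ = ‖(1 + τ k • Q) ^ n k - exp (τ k • Q) ^ n k‖ := by rw [hexp]
      _ ≤ n k * ‖τ k • Q‖ ^ 2 * Real.exp (n k * ‖τ k • Q‖) :=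
          norm_one_add_pow_sub_exp_pow_le _ _
      _ = _ := by rw [norm_smul, Real.norm_eq_abs, abs_mul, Nat.abs_cast, ← mul_assoc (n k : ℝ)]; ring
  have hbound_lim : Tendsto (fun k ↦ |(n k : ℝ) * τ k| * |τ k| * ‖Q‖ ^ 2 *
      Real.exp (|(n k : ℝ) * τ k| * ‖Q‖)) l (𝓝 0) := by
    simpa using ((hnt.abs.mul hτ.abs).mul_const (‖Q‖ ^ 2)).mul
      ((hnt.abs.mul_const ‖Q‖).rexp)
  have hdiff := squeeze_zero_norm hbound hbound_lim
  simpa using hdiff.add ((hnt.smul_const Q).exp)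

end BanachAlgebra

theorem stmt1_general {d : ℕ} (Q : Matrix (Fin d) (Fin d) ℝ)
    (t : ℝ) (τ : ℕ → ℝ) (n : ℕ → ℕ)
    (hτ : Filter.Tendsto τ Filter.atTop (nhds 0))
    (hnt : Filter.Tendsto (fun k => (n k : ℝ) * τ k) Filter.atTop (nhds t)) :
    Filter.Tendsto (fun k => (1 + τ k • Q) ^ n k) Filter.atTop
      (nhds (NormedSpace.exp (t • Q))) := by
  -- `‖1‖ = 0` for `0 × 0` matrices, so the operator norm satisfies `NormOneClass` only for `d > 0`.
  rcases isEmpty_or_nonempty (Fin d) with hd | hd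
  · exact tendsto_const_nhds.congr fun _ ↦ Subsingleton.elim _ _
  · let := Matrix.linftyOpNormedRing (n := Fin d) (α := ℝ)
    let := Matrix.linftyOpNormedAlgebra (n := Fin d) (R := ℝ) (α := ℝ)
    exact tendsto_one_add_smul_pow_exp Q hτ hnt

/-- If `Q` is a Kolmogorov matrix and `P^τ = I + τ Q`, with `τ → 0`, `n → ∞` and
`n τ → t`, then `(P^τ)^n` converges to the matrix exponential `e^{tQ}`. -/
theorem stmt1 {d : ℕ} (Q : Matrix (Fin d) (Fin d) ℝ)
    (hoff : ∀ i j, i ≠ j → 0 ≤ Q i j)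
    (hrow : ∀ i, ∑ j, Q i j = 0)
    (t : ℝ) (τ : ℕ → ℝ) (n : ℕ → ℕ)
    (hpos : ∀ k, 0 < τ k)
    (hτ : Filter.Tendsto τ Filter.atTop (nhds 0))
    (hn : Filter.Tendsto n Filter.atTop Filter.atTop)
    (hnt : Filter.Tendsto (fun k => (n k : ℝ) * τ k) Filter.atTop (nhds t)) :
    Filter.Tendsto (fun k => (1 + τ k • Q) ^ n k) Filter.atTop
      (nhds (NormedSpace.exp (t • Q))) :=
  stmt1_general Q t τ n hτ hnt
end

section
/- For the kinetic equation ẋ_k = Σ_i x_i Q_{ik}(x) on the simplex Σ_d with Lipschitz Kolmogorov matrices Q(x): if the initial point x has x_k > 0 for some coordinate k, then the solution satisfies (X_x(t))_k > 0 for all t ≥ 0. -/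
/-!
Along the trajectory the matrices `Q (x s)` are bounded on `[0, t]` and have nonnegative
off-diagonal entries. The squared negative part `u = ∑ j, min (x j) 0 ^ 2` is then `C¹` with
`u' = ∑ j, 2 min (x j) 0 (x Q)_j ≤ 2 M d u`, since a negative coordinate can only be fed by the
nonnegative flux of the others; as `u 0 = 0`, Gronwall's inequality forces `u = 0`, i.e. the
trajectory stays in the nonnegative orthant. There `(x Q)_k ≥ Q_kk x_k ≥ -M x_k`, and Gronwall
once more gives `x_k t ≥ x_k 0 * exp (-M t) > 0`.
-/

open Real Set Topology Asymptotics Matrix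

theorem hasDerivAt_min_zero_sq (y : ℝ) :
    HasDerivAt (fun z : ℝ => min z 0 ^ 2) (2 * min y 0) y := by
  rcases lt_trichotomy y 0 with hy | rfl | hy
  · have h : (fun z : ℝ => z ^ 2) =ᶠ[𝓝 y] fun z => min z 0 ^ 2 := by
      filter_upwards [Iio_mem_nhds hy] with z hz
      rw [min_eq_left hz.le]
    simpa [min_eq_left hy.le] using (hasDerivAt_pow 2 y).congr_of_eventuallyEq h.symm
  · rw [hasDerivAt_iff_isLittleO_nhds_zero]
    refine IsBigO.trans_isLittleO (g := fun h : ℝ => h ^ 2) (IsBigO.of_bound 1 ?_)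
      (isLittleO_pow_id one_lt_two)
    filter_upwards with h
    rcases min_cases h 0 with ⟨hm, -⟩ | ⟨hm, -⟩ <;> simp [hm, sq_nonneg]
  · have h : (fun _ : ℝ => (0 : ℝ)) =ᶠ[𝓝 y] fun z => min z 0 ^ 2 := by
      filter_upwards [Ioi_mem_nhds hy] with z hz
      rw [min_eq_right hz.le, zero_pow two_ne_zero]
    simpa [min_eq_right hy.le] using (hasDerivAt_const y (0 : ℝ)).congr_of_eventuallyEq h.symm

theorem le_mul_exp_of_hasDerivAt_le_mul {f f' : ℝ → ℝ} {C a b : ℝ}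
    (hf : ∀ s ∈ Icc a b, HasDerivAt f (f' s) s) (hle : ∀ s ∈ Ico a b, f' s ≤ C * f s) :
    ∀ s ∈ Icc a b, f s ≤ f a * exp (C * (s - a)) := by
  intro s hs
  simpa only [gronwallBound_ε0] using le_gronwallBound_of_liminf_deriv_right_le (ε := 0)
    (fun s hs => (hf s hs).continuousAt.continuousWithinAt)
    (fun s hs _ hr =>
      (hf s (Ico_subset_Icc_self hs)).hasDerivWithinAt.liminf_right_slope_le hr)
    le_rfl (fun s hs => (add_zero (C * f s)).symm ▸ hle s hs) s hs

theorem two_mul_min_zero_mul_le {y z a M : ℝ} (ha : 0 ≤ a) (haM : a ≤ M) :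
    2 * min y 0 * (z * a) ≤ M * (min y 0 ^ 2 + min z 0 ^ 2) := by
  have hy : min y 0 ≤ 0 := min_le_right _ _
  have hz : min z 0 ≤ 0 := min_le_right _ _
  have hzz : min z 0 ≤ z := min_le_left _ _
  nlinarith [mul_le_mul_of_nonpos_left (mul_le_mul_of_nonneg_right hzz ha) hy,
    mul_le_mul_of_nonneg_left haM (mul_nonneg_of_nonpos_of_nonpos hy hz),
    sq_nonneg (min y 0 - min z 0)]

theorem two_mul_min_zero_mul_self_le {y a M : ℝ} (haM : a ≤ M) :
    2 * min y 0 * (y * a) ≤ M * (min y 0 ^ 2 + min y 0 ^ 2) := by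
  have hy : min y 0 * y = min y 0 ^ 2 := by
    rcases min_cases y 0 with ⟨h, -⟩ | ⟨h, -⟩ <;> rw [h] <;> ring
  calc 2 * min y 0 * (y * a) = 2 * min y 0 ^ 2 * a := by rw [← hy]; ring
    _ ≤ M * (min y 0 ^ 2 + min y 0 ^ 2) := by nlinarith [sq_nonneg (min y 0)]

section Metzler

variable {ι : Type*} [Fintype ι]

theorem sum_two_mul_min_zero_mul_vecMul_le (v : ι → ℝ) {A : Matrix ι ι ℝ} {M : ℝ}
    (hoff : ∀ i j, i ≠ j → 0 ≤ A i j) (hM : ∀ i j, |A i j| ≤ M) :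
    ∑ j, 2 * min (v j) 0 * (v ᵥ* A) j ≤ 2 * M * Fintype.card ι * ∑ j, min (v j) 0 ^ 2 :=
  calc ∑ j, 2 * min (v j) 0 * (v ᵥ* A) j
      = ∑ j, ∑ i, 2 * min (v j) 0 * (v i * A i j) := by
        simp only [vecMul, dotProduct, Finset.mul_sum]
    _ ≤ ∑ j, ∑ i, M * (min (v j) 0 ^ 2 + min (v i) 0 ^ 2) := by
        refine Finset.sum_le_sum fun j _ => Finset.sum_le_sum fun i _ => ?_
        rcases eq_or_ne i j with rfl | hij
        · exact two_mul_min_zero_mul_self_le (abs_le.1 (hM i i)).2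
        · exact two_mul_min_zero_mul_le (hoff i j hij) (abs_le.1 (hM i j)).2
    _ = 2 * M * Fintype.card ι * ∑ j, min (v j) 0 ^ 2 := by
        simp only [mul_add, Finset.sum_add_distrib, ← Finset.mul_sum, Finset.sum_const,
          Finset.card_univ, nsmul_eq_mul]
        ring

theorem neg_mul_le_vecMul_apply {v : ι → ℝ} {A : Matrix ι ι ℝ} {M : ℝ}
    (hv : ∀ i, 0 ≤ v i) (hoff : ∀ i j, i ≠ j → 0 ≤ A i j) (k : ι) (hk : -M ≤ A k k) :
    -M * v k ≤ (v ᵥ* A) k := by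
  classical
  have hrest : 0 ≤ ∑ i ∈ Finset.univ.erase k, v i * A i k :=
    Finset.sum_nonneg fun i hi => mul_nonneg (hv i) (hoff i k (Finset.ne_of_mem_erase hi))
  rw [vecMul, dotProduct, ← Finset.add_sum_erase _ _ (Finset.mem_univ k)]
  nlinarith [mul_le_mul_of_nonneg_left hk (hv k)]

theorem exists_forall_abs_apply_le_of_continuous {A : ℝ → Matrix ι ι ℝ}
    (hA : ∀ i j, Continuous fun s => A s i j) (a b : ℝ) :
    ∃ M, ∀ s ∈ Icc a b, ∀ i j, |A s i j| ≤ M := by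
  have hc : Continuous fun s => (fun i j => A s i j : ι → ι → ℝ) :=
    continuous_pi fun i => continuous_pi fun j => hA i j
  obtain ⟨M, hM⟩ := isCompact_Icc.exists_bound_of_continuousOn hc.continuousOn
  exact ⟨M, fun s hs i j =>
    (norm_le_pi_norm (fun j => A s i j) j).trans ((norm_le_pi_norm _ i).trans (hM s hs))⟩

variable {x : ℝ → ι → ℝ} {A : ℝ → Matrix ι ι ℝ} {M t : ℝ}

theorem nonneg_of_hasDerivAt_vecMul
    (hx : ∀ s j, HasDerivAt (fun s => x s j) ((x s ᵥ* A s) j) s)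
    (hoff : ∀ s ∈ Ico 0 t, ∀ i j, i ≠ j → 0 ≤ A s i j)
    (hM : ∀ s ∈ Ico 0 t, ∀ i j, |A s i j| ≤ M)
    (h0 : ∀ j, 0 ≤ x 0 j) : ∀ s ∈ Icc 0 t, ∀ j, 0 ≤ x s j := by
  set u : ℝ → ℝ := fun s => ∑ j, min (x s j) 0 ^ 2
  have hu : ∀ s, HasDerivAt u (∑ j, 2 * min (x s j) 0 * (x s ᵥ* A s) j) s := fun s =>
    HasDerivAt.fun_sum fun j _ => (hasDerivAt_min_zero_sq _).comp s (hx s j)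
  have hu0 : u 0 = 0 := by simp [u, min_eq_right (h0 _)]
  intro s hs j
  have hus : u s ≤ 0 := by
    simpa [hu0] using le_mul_exp_of_hasDerivAt_le_mul (fun s _ => hu s)
      (fun s hs => sum_two_mul_min_zero_mul_vecMul_le _ (hoff s hs) (hM s hs)) s hs
  have hj : min (x s j) 0 ^ 2 ≤ 0 :=
    (Finset.single_le_sum (fun i _ => sq_nonneg (min (x s i) 0)) (Finset.mem_univ j)).trans hus
  exact min_eq_right_iff.1 ((pow_eq_zero_iff two_ne_zero).1 (le_antisymm hj (sq_nonneg _)))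

theorem mul_exp_le_of_hasDerivAt_vecMul
    (hx : ∀ s j, HasDerivAt (fun s => x s j) ((x s ᵥ* A s) j) s)
    (hoff : ∀ s ∈ Ico 0 t, ∀ i j, i ≠ j → 0 ≤ A s i j)
    (hM : ∀ s ∈ Ico 0 t, ∀ i j, |A s i j| ≤ M)
    (h0 : ∀ j, 0 ≤ x 0 j) (k : ι) : ∀ s ∈ Icc 0 t, x 0 k * exp (-M * s) ≤ x s k := by
  have hnonneg := nonneg_of_hasDerivAt_vecMul hx hoff hM h0
  have hbound : ∀ s ∈ Ico 0 t, -(x s ᵥ* A s) k ≤ -M * -x s k := fun s hs => by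
    have := neg_mul_le_vecMul_apply (hnonneg s (Ico_subset_Icc_self hs)) (hoff s hs) k
      (abs_le.1 (hM s hs k k)).1
    linarith
  intro s hs
  have := le_mul_exp_of_hasDerivAt_le_mul (fun s _ => (hx s k).neg) hbound s hs
  simp only [Pi.neg_apply, sub_zero] at this
  linarith

end Metzler

theorem stmt8_general {d : ℕ} (Q : (Fin d → ℝ) → Matrix (Fin d) (Fin d) ℝ) (K : NNReal)
    (hoff : ∀ x i j, i ≠ j → 0 ≤ Q x i j)
    (hlip : ∀ i j, LipschitzWith K (fun y => Q y i j))
    (x : ℝ → Fin d → ℝ)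
    (hode : ∀ t, ∀ k, HasDerivAt (fun s => x s k) (∑ i, x t i * Q (x t) i k) t)
    (hinit : (∀ j, 0 ≤ x 0 j) ∧ ∑ j, x 0 j = 1)
    (k : Fin d) (hk : 0 < x 0 k) :
    ∀ t ≥ (0:ℝ), 0 < x t k := by
  intro t ht
  have hxc : Continuous x :=
    continuous_pi fun j => continuous_iff_continuousAt.2 fun s => (hode s j).continuousAt
  obtain ⟨M, hM⟩ :=
    exists_forall_abs_apply_le_of_continuous (fun i j => (hlip i j).continuous.comp hxc) 0 t
  have hbound := mul_exp_le_of_hasDerivAt_vecMul (A := fun s => Q (x s)) hode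
    (fun s _ => hoff (x s)) (fun s hs => hM s (Ico_subset_Icc_self hs)) hinit.1 k t ⟨ht, le_rfl⟩
  exact (mul_pos hk (exp_pos _)).trans_le hbound

/-- For the kinetic equations `ẋ_k = Σ_i x_i Q_{ik}(x)` with a Lipschitz family of
Kolmogorov matrices: if a coordinate is strictly positive initially, it stays
strictly positive for all `t ≥ 0`. -/
theorem stmt8 {d : ℕ} (Q : (Fin d → ℝ) → Matrix (Fin d) (Fin d) ℝ) (K : NNReal)
    (hoff : ∀ x i j, i ≠ j → 0 ≤ Q x i j)
    (hrow : ∀ x i, ∑ j, Q x i j = 0)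
    (hlip : ∀ i j, LipschitzWith K (fun y => Q y i j))
    (x : ℝ → Fin d → ℝ)
    (hode : ∀ t, ∀ k, HasDerivAt (fun s => x s k) (∑ i, x t i * Q (x t) i k) t)
    (hinit : (∀ j, 0 ≤ x 0 j) ∧ ∑ j, x 0 j = 1)
    (k : Fin d) (hk : 0 < x 0 k) :
    ∀ t ≥ (0:ℝ), 0 < x t k :=
  stmt8_general Q K hoff hlip x hode hinit k hk
end

section
/- In the game Γ_N of N+1 players with payoffs R_i(x, b) for small players (x = n/N the empirical distribution) and Lipschitz R with R̂ = sup_{i,b} ‖R_i(·,b)‖_Lip: if (x_N, b*_N) are Nash equilibria of Γ_N with x_N having vanishing coordinates exactly on a set I, then for all i, j ∉ I, |R_j(x_N, b*_N) − R_i(x_N, b*_N)| ≤ (2/N) R̂, and R_k(x_N, b*_N) ≤ R_i(x_N, b*_N) + (2/N) R̂ for k ∈ I, i ∉ I. -/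
/-- Approximate equality of payoffs at a Nash equilibrium of the `N+1` player
game `Γ_N`. -/
theorem stmt10 {d : ℕ} {B : Type*} (N : ℕ) (hN : 0 < N)
    (R : Fin d → (Fin d → ℝ) → B → ℝ) (Rhat : ℝ)
    (hlip : ∀ i b x y, |R i x b - R i y b| ≤ Rhat * ∑ j, |x j - y j|)
    (xN : Fin d → ℝ) (b : B) (I : Set (Fin d))
    (hxNpos : ∀ j, 0 ≤ xN j) (hxNsum : ∑ j, xN j = 1)
    (hI : ∀ k, xN k = 0 ↔ k ∈ I)
    (hNash : ∀ i j, 0 < xN i →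
      R j (fun k => xN k - (if k = i then 1 / (N:ℝ) else 0)
            + (if k = j then 1 / (N:ℝ) else 0)) b
        ≤ R i xN b) :
    (∀ i j, i ∉ I → j ∉ I → |R j xN b - R i xN b| ≤ 2 / (N:ℝ) * Rhat) ∧
    (∀ k ∈ I, ∀ i, i ∉ I → R k xN b ≤ R i xN b + 2 / (N:ℝ) * Rhat) := by
  have key : ∀ i j : Fin d, i ∉ I → R j xN b ≤ R i xN b + 2 / (N:ℝ) * Rhat := by
    intro i j hi
    -- Rhat ≥ 0
    have hR0 : 0 ≤ Rhat := by
      have h := hlip i b (fun _ => 0) (fun k => if k = i then 1 else 0)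
      have hs : (∑ k : Fin d, |(0:ℝ) - (if k = i then 1 else 0)|) = 1 := by
        rw [Fintype.sum_eq_single i]
        · simp
        · intro k hk; simp [hk]
      rw [hs, mul_one] at h
      exact le_trans (abs_nonneg _) h
    have hxi : 0 < xN i := by
      rcases lt_or_eq_of_le (hxNpos i) with h | h
      · exact h
      · exact absurd ((hI i).mp h.symm) hi
    set x' : Fin d → ℝ := fun k => xN k - (if k = i then 1 / (N:ℝ) else 0)
            + (if k = j then 1 / (N:ℝ) else 0) with hx'
    have hnash := hNash i j hxi
    have hlipj := hlip j b xN x'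
    have hsum : (∑ k, |xN k - x' k|) ≤ 2 / (N:ℝ) := by
      have hb : ∀ k, |xN k - x' k| ≤ (if k = i then 1/(N:ℝ) else 0) + (if k = j then 1/(N:ℝ) else 0) := by
        intro k
        have : xN k - x' k = (if k = i then 1/(N:ℝ) else 0) - (if k = j then 1/(N:ℝ) else 0) := by
          simp [hx']; ring
        rw [this]
        refine le_trans (abs_sub _ _) ?_
        have hNpos : (0:ℝ) ≤ 1/(N:ℝ) := by positivity
        gcongr <;> split <;> simp [abs_of_nonneg (inv_nonneg.mpr (Nat.cast_nonneg N : (0:ℝ) ≤ N))]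
      calc (∑ k, |xN k - x' k|) ≤ ∑ k, ((if k = i then 1/(N:ℝ) else 0) + (if k = j then 1/(N:ℝ) else 0)) := Finset.sum_le_sum (fun k _ => hb k)
        _ = 1/(N:ℝ) + 1/(N:ℝ) := by rw [Finset.sum_add_distrib]; simp
        _ = 2/(N:ℝ) := by ring
      -- end
    have h1 : R j xN b - R j x' b ≤ Rhat * (2/(N:ℝ)) :=
      le_trans (le_trans (le_abs_self _) hlipj) (by gcongr)
    have : R j xN b ≤ R j x' b + Rhat * (2/(N:ℝ)) := by linarith
    calc R j xN b ≤ R j x' b + Rhat * (2/(N:ℝ)) := this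
      _ ≤ R i xN b + 2/(N:ℝ) * Rhat := by rw [mul_comm]; linarith
  constructor
  · intro i j hi hj
    rw [abs_sub_le_iff]
    constructor <;> [skip; skip] <;> linarith [key i j hi, key j i hj]
  · intro k hk i hi
    exact key i k hi
end

section
/- Consider the proportional-fine replicator dynamics ẋ_j = x_j (w_j − w̄(x))(1 − λ p(b*(x))) on the simplex Σ_d, where w̄(x) = Σ_i x_i w_i. Suppose b*(x) depends on x only through f̄(x) = λ Σ_j x_j w_j via a smooth function with the chain rule as in the model. Then the function V(x) = (1 − λ p(b*(x)))² is non-increasing along trajectories; more precisely, d/dt V(x(t)) = −2λ² V(x) p'(b̂(f̄)) b̂'(f̄) Var_x(w) ≤ 0, where Var_x(w) = Σ_j x_j w_j² − w̄(x)² ≥ 0. -/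
/-! The mean fitness `S = ∑ xᵢ wᵢ` of a replicator flow with common rate factor `c` moves at
speed `c · Var_x(w)`. Since `V = c²` with `c = 1 - λ p(b̂(λ S))`, the chain rule gives
`V' = -2 λ² c² p' b̂' Var_x(w)`, which is `≤ 0` because the variance of a probability
vector is nonnegative (Jensen for `t ↦ t²`). -/

open Finset

lemma sq_sum_mul_le_sum_mul_sq {ι : Type*} (s : Finset ι) {x w : ι → ℝ}
    (hx : ∀ i ∈ s, 0 ≤ x i) (hx1 : ∑ i ∈ s, x i = 1) :
    (∑ i ∈ s, x i * w i) ^ 2 ≤ ∑ i ∈ s, x i * w i ^ 2 :=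
  even_two.convexOn_pow.map_sum_le hx hx1 fun _ _ => Set.mem_univ _

lemma hasDerivAt_sum_mul_of_replicator {ι : Type*} [Fintype ι] {x : ℝ → ι → ℝ} {w : ι → ℝ}
    {c t : ℝ}
    (hx : ∀ j, HasDerivAt (fun s => x s j) (x t j * (w j - ∑ i, x t i * w i) * c) t) :
    HasDerivAt (fun s => ∑ i, x s i * w i)
      ((∑ j, x t j * w j ^ 2 - (∑ i, x t i * w i) ^ 2) * c) t := by
  refine (HasDerivAt.fun_sum fun j _ => (hx j).mul_const (w j)).congr_deriv ?_
  have hterm : ∀ j, x t j * (w j - ∑ i, x t i * w i) * c * w j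
      = x t j * w j ^ 2 * c - x t j * w j * ((∑ i, x t i * w i) * c) := fun j => by ring
  simp only [hterm, sum_sub_distrib, ← sum_mul]
  ring

theorem stmt12_general {d : ℕ} (w : Fin d → ℝ)
    (lam : ℝ)
    (p p' bhat bhat' : ℝ → ℝ)
    (hp : ∀ s, HasDerivAt p (p' s) s) (hp' : ∀ s, 0 < p' s)
    (hb : ∀ s, HasDerivAt bhat (bhat' s) s) (hb' : ∀ s, 0 < bhat' s)
    (x : ℝ → Fin d → ℝ)
    (hsimp : ∀ t, (∀ j, 0 ≤ x t j) ∧ ∑ j, x t j = 1)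
    (hode : ∀ t j, HasDerivAt (fun s => x s j)
      (x t j * (w j - ∑ i, x t i * w i) *
        (1 - lam * p (bhat (lam * ∑ i, x t i * w i)))) t) :
    ∀ t,
      HasDerivAt (fun s => (1 - lam * p (bhat (lam * ∑ i, x s i * w i))) ^ 2)
        (-2 * lam ^ 2 * (1 - lam * p (bhat (lam * ∑ i, x t i * w i))) ^ 2 *
          p' (bhat (lam * ∑ i, x t i * w i)) * bhat' (lam * ∑ i, x t i * w i) *
          ((∑ j, x t j * (w j) ^ 2) - (∑ i, x t i * w i) ^ 2)) t ∧
      (-2 * lam ^ 2 * (1 - lam * p (bhat (lam * ∑ i, x t i * w i))) ^ 2 *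
          p' (bhat (lam * ∑ i, x t i * w i)) * bhat' (lam * ∑ i, x t i * w i) *
          ((∑ j, x t j * (w j) ^ 2) - (∑ i, x t i * w i) ^ 2)) ≤ 0 := by
  intro t
  have hmean := hasDerivAt_sum_mul_of_replicator (hode t)
  have hbhat := (hb _).comp t (hmean.const_mul lam)
  have hV := ((((hp _).comp t hbhat).const_mul lam).const_sub 1).pow 2
  have hvar := sub_nonneg.mpr
    (sq_sum_mul_le_sum_mul_sq (w := w) univ (fun j _ => (hsimp t).1 j) (hsimp t).2)
  refine ⟨hV.congr_deriv (by simp only [Function.comp_apply]; push_cast; ring), ?_⟩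
  have hp'_pos := hp' (bhat (lam * ∑ i, x t i * w i))
  have hb'_pos := hb' (lam * ∑ i, x t i * w i)
  simp only [neg_mul, neg_nonpos]
  exact mul_nonneg (by positivity) hvar

/-- `V(x) = (1 - λ p(b*(x)))²` is a Lyapunov function for the proportional-fine
replicator dynamics: along trajectories
`dV/dt = -2λ² V p'(b̂(f̄)) b̂'(f̄) Var_x(w) ≤ 0`. -/
theorem stmt12 {d : ℕ} (w : Fin d → ℝ) (hw : StrictMono w) (hwpos : ∀ j, 0 < w j)
    (lam : ℝ) (hlam : 0 < lam)
    (p p' bhat bhat' : ℝ → ℝ)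
    (hp : ∀ s, HasDerivAt p (p' s) s) (hp' : ∀ s, 0 < p' s)
    (hb : ∀ s, HasDerivAt bhat (bhat' s) s) (hb' : ∀ s, 0 < bhat' s)
    (x : ℝ → Fin d → ℝ)
    (hsimp : ∀ t, (∀ j, 0 ≤ x t j) ∧ ∑ j, x t j = 1)
    (hode : ∀ t j, HasDerivAt (fun s => x s j)
      (x t j * (w j - ∑ i, x t i * w i) *
        (1 - lam * p (bhat (lam * ∑ i, x t i * w i)))) t) :
    ∀ t,
      HasDerivAt (fun s => (1 - lam * p (bhat (lam * ∑ i, x s i * w i))) ^ 2)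
        (-2 * lam ^ 2 * (1 - lam * p (bhat (lam * ∑ i, x t i * w i))) ^ 2 *
          p' (bhat (lam * ∑ i, x t i * w i)) * bhat' (lam * ∑ i, x t i * w i) *
          ((∑ j, x t j * (w j) ^ 2) - (∑ i, x t i * w i) ^ 2)) t ∧
      (-2 * lam ^ 2 * (1 - lam * p (bhat (lam * ∑ i, x t i * w i))) ^ 2 *
          p' (bhat (lam * ∑ i, x t i * w i)) * bhat' (lam * ∑ i, x t i * w i) *
          ((∑ j, x t j * (w j) ^ 2) - (∑ i, x t i * w i) ^ 2)) ≤ 0 :=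
  stmt12_general w lam p p' bhat bhat' hp hp' hb hb' x hsimp hode
end
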